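/- Let m, n be positive integers, let B ∈ M_m(ℂ) and C ∈ M_n(ℂ), and let A = B⊗I_n + I_m⊗C be the Kronecker sum of B and C. Then det_1(exp(A)) = exp(tr_1(A)) if and only if the m-th Hadamard power of exp(C) coincides with its m-th matrix power, i.e. (exp(C))^{(m)} = (exp(C))^m. -/

import Mathlib

open Matrix Kronecker

/-- The partial determinant `det₁`: for `A ∈ M_{mn}(F) = M_m(F) ⊗ M_n(F)`,
`det1 A` is the `n × n` matrix whose `(i,j)` entry is the determinant of the
block `A_{ij} ∈ M_m(F)` given by `(A_{ij})_{kl} = A (k,i) (l,j)`. -/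
def det1 {F : Type*} [Field F] {m n : ℕ}
    (A : Matrix (Fin m × Fin n) (Fin m × Fin n) F) : Matrix (Fin n) (Fin n) F :=
  Matrix.of fun i j => Matrix.det (Matrix.of fun k l : Fin m => A (k, i) (l, j))

/-- The `m`-th Hadamard (entrywise) power of a matrix. -/
def hpow {F : Type*} [Monoid F] {n : ℕ} (B : Matrix (Fin n) (Fin n) F) (m : ℕ) :
    Matrix (Fin n) (Fin n) F :=
  Matrix.of fun i j => (B i j) ^ m

/-- The partial trace `tr₁`: the `n × n` matrix of traces of the blocks
`A_{ij} ∈ M_m(ℂ)` given by `(A_{ij})_{kl} = A (k,i) (l,j)`. -/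
noncomputable def tr1 {m n : ℕ} (A : Matrix (Fin m × Fin n) (Fin m × Fin n) ℂ) :
    Matrix (Fin n) (Fin n) ℂ :=
  Matrix.of fun i j => ∑ k : Fin m, A (k, i) (k, j)

/-!
Since `B ⊗ Iₙ` and `Iₘ ⊗ C` commute, `exp A = exp B ⊗ exp C`, whose `(i,j)` block is
`(exp C)ᵢⱼ • exp B`; hence `det₁ (exp A) = det (exp B) • (exp C)^(m)`. On the other side
`tr₁ A = tr B • Iₙ + m • C`, so `exp (tr₁ A) = exp (tr B) • (exp C)^m`. Jacobi's formula
`det (exp B) = exp (tr B)` makes the two scalar factors equal and nonzero, and they cancel.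

Jacobi's formula is proved from the fact that `t ↦ det (exp (t • B))` is multiplicative in `t`
with derivative `tr B` at `0`, the derivative of `det` at the identity being the trace.
-/

open NormedSpace

theorem Complex.eq_exp_mul_of_map_add {φ : ℂ → ℂ} {c : ℂ}
    (hadd : ∀ s t, φ (s + t) = φ s * φ t) (hφ0 : φ 0 = 1) (hd : HasDerivAt φ c 0) (t : ℂ) :
    φ t = Complex.exp (c * t) := by
  have hderiv (t : ℂ) : HasDerivAt φ (φ t * c) t := by
    have hshift := (HasDerivAt.comp_sub_const t t ((sub_self t).symm ▸ hd)).const_mul (φ t)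
    refine hshift.congr_of_eventuallyEq (.of_forall fun s => ?_)
    show φ s = φ t * φ (s - t)
    rw [← hadd, add_sub_cancel]
  have hconst (s : ℂ) : HasDerivAt (fun s => Complex.exp (-(c * s)) * φ s) 0 s := by
    have hexp : HasDerivAt (fun s => Complex.exp (-(c * s))) (Complex.exp (-(c * s)) * -c) s := by
      simpa using ((hasDerivAt_id' s).const_mul c).neg.cexp
    exact (hexp.fun_mul (hderiv s)).congr_deriv (by ring)
  have h := is_const_of_deriv_eq_zero (fun s => (hconst s).differentiableAt)
    (fun s => (hconst s).deriv) t 0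
  simp only [mul_zero, neg_zero, Complex.exp_zero, hφ0, one_mul] at h
  calc φ t = Complex.exp (c * t) * (Complex.exp (-(c * t)) * φ t) := by
        rw [← mul_assoc, ← Complex.exp_add, add_neg_cancel, Complex.exp_zero, one_mul]
    _ = Complex.exp (c * t) := by rw [h, mul_one]

theorem Matrix.hasDerivAt_det_of_eq_one {𝕜 n : Type*} [NontriviallyNormedField 𝕜] [Fintype n]
    [DecidableEq n] {γ : 𝕜 → Matrix n n 𝕜} {A : Matrix n n 𝕜} {t : 𝕜}
    (hγ : ∀ i j, HasDerivAt (fun s => γ s i j) (A i j) t) (hγt : γ t = 1) :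
    HasDerivAt (fun s => (γ s).det) A.trace t := by
  have hterm (σ : Equiv.Perm n) :
      HasDerivAt (fun s => (Equiv.Perm.sign σ : 𝕜) * ∏ i, γ s (σ i) i)
        (if σ = 1 then A.trace else 0) t := by
    have hprod := HasDerivAt.fun_finsetProd (u := Finset.univ) fun i _ => hγ (σ i) i
    refine (hprod.const_mul _).congr_deriv ?_
    simp only [hγt, Matrix.one_apply, smul_eq_mul]
    split_ifs with hσ
    · simp [hσ, Matrix.trace]
    -- a permutation `σ ≠ 1` moves some `j ≠ i`, so each product over `j ≠ i` has a zero factor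
    · refine mul_eq_zero_of_right _ (Finset.sum_eq_zero fun i _ => ?_)
      obtain ⟨j, hj, hji⟩ := Finset.exists_mem_ne (σ.two_le_card_support_of_ne_one hσ) i
      rw [Finset.prod_eq_zero (Finset.mem_erase.mpr ⟨hji, Finset.mem_univ j⟩)
        (if_neg (Equiv.Perm.mem_support.mp hj)), zero_mul]
  have hsum := HasDerivAt.fun_sum (u := Finset.univ) fun σ _ => hterm σ
  simpa only [Finset.sum_ite_eq', Finset.mem_univ, if_true, ← Matrix.det_apply'] using hsum

section MatrixExp

variable {m n : Type*} [Fintype m] [DecidableEq m] [Fintype n] [DecidableEq n]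

open scoped Matrix.Norms.Operator

theorem Matrix.det_exp (A : Matrix n n ℂ) : (exp A).det = Complex.exp A.trace := by
  have hadd (s t : ℂ) : (exp ((s + t) • A)).det = (exp (s • A)).det * (exp (t • A)).det := by
    rw [add_smul, Matrix.exp_add_of_commute _ _ ((Commute.refl A).smul_left s |>.smul_right t),
      det_mul]
  have hd : HasDerivAt (fun s : ℂ => (exp (s • A)).det) A.trace 0 := by
    refine hasDerivAt_det_of_eq_one (fun i j => ?_) (by simp)
    have hentry :=
      (entryLinearMap ℂ ℂ i j).toContinuousLinearMap.hasFDerivAt.comp_hasDerivAt (0 : ℂ)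
        (hasDerivAt_exp_smul_const (𝕂 := ℂ) A 0)
    simp only [zero_smul, exp_zero, one_mul, LinearMap.coe_toContinuousLinearMap'] at hentry
    exact hentry
  simpa using Complex.eq_exp_mul_of_map_add hadd (by simp) hd 1

theorem Matrix.exp_kronecker_one (A : Matrix m m ℂ) :
    exp (A ⊗ₖ (1 : Matrix n n ℂ)) = exp A ⊗ₖ (1 : Matrix n n ℂ) := by
  rw [kronecker_one, kronecker_one, exp_blockDiagonal]
  exact congrArg blockDiagonal (Pi.exp_def _)

theorem Matrix.exp_reindex (e : m ≃ n) (A : Matrix m m ℂ) :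
    exp (reindex e e A) = reindex e e (exp A) :=
  (map_exp (reindexAlgEquiv ℚ ℂ e) (continuous_id.matrix_reindex e e) A).symm

theorem Matrix.exp_one_kronecker (A : Matrix n n ℂ) :
    exp ((1 : Matrix m m ℂ) ⊗ₖ A) = (1 : Matrix m m ℂ) ⊗ₖ exp A := by
  rw [one_kronecker, one_kronecker, ← kronecker_one, ← kronecker_one, exp_reindex,
    exp_kronecker_one]

theorem Matrix.exp_kroneckerSum (A : Matrix m m ℂ) (B : Matrix n n ℂ) :
    exp (A ⊗ₖ (1 : Matrix n n ℂ) + (1 : Matrix m m ℂ) ⊗ₖ B) = exp A ⊗ₖ exp B := by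
  have hcomm : Commute (A ⊗ₖ (1 : Matrix n n ℂ)) ((1 : Matrix m m ℂ) ⊗ₖ B) := by
    simp only [Commute, SemiconjBy, ← mul_kronecker_mul, mul_one, one_mul]
  rw [Matrix.exp_add_of_commute _ _ hcomm, exp_kronecker_one, exp_one_kronecker,
    ← mul_kronecker_mul, mul_one, one_mul]

theorem Matrix.exp_smul_one (z : ℂ) : exp (z • (1 : Matrix n n ℂ)) = Complex.exp z • 1 := by
  rw [smul_one_eq_diagonal, exp_diagonal, Pi.exp_def, ← Complex.exp_eq_exp_ℂ,
    ← smul_one_eq_diagonal]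

theorem Matrix.exp_smul_one_add_natCast_smul (z : ℂ) (k : ℕ) (A : Matrix n n ℂ) :
    exp (z • (1 : Matrix n n ℂ) + (k : ℂ) • A) = Complex.exp z • exp A ^ k := by
  rw [Matrix.exp_add_of_commute _ _ ((Commute.one_left A).smul_left z |>.smul_right _),
    exp_smul_one, Nat.cast_smul_eq_nsmul, Matrix.exp_nsmul, smul_one_mul]

end MatrixExp

section PartialTraceDet

variable {m n : ℕ}

theorem det1_kronecker {F : Type*} [Field F] (A : Matrix (Fin m) (Fin m) F)
    (B : Matrix (Fin n) (Fin n) F) : det1 (A ⊗ₖ B) = A.det • hpow B m := by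
  ext i j
  have hblock : (of fun k l : Fin m => (A ⊗ₖ B) (k, i) (l, j)) = B i j • A := by
    ext k l
    simp [mul_comm]
  simp only [det1, hpow, of_apply, Matrix.smul_apply, smul_eq_mul, hblock, det_smul,
    Fintype.card_fin]
  ring

theorem tr1_add (A A' : Matrix (Fin m × Fin n) (Fin m × Fin n) ℂ) :
    tr1 (A + A') = tr1 A + tr1 A' := by
  ext i j
  simp [tr1, Finset.sum_add_distrib]

theorem tr1_kronecker (A : Matrix (Fin m) (Fin m) ℂ) (B : Matrix (Fin n) (Fin n) ℂ) :
    tr1 (A ⊗ₖ B) = A.trace • B := by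
  ext i j
  simp [tr1, Matrix.trace, Finset.sum_mul]

end PartialTraceDet

theorem det1_exp_kroneckerSum_iff_general {m n : ℕ}
    (B : Matrix (Fin m) (Fin m) ℂ) (C : Matrix (Fin n) (Fin n) ℂ) :
    det1 (NormedSpace.exp
        (B ⊗ₖ (1 : Matrix (Fin n) (Fin n) ℂ) + (1 : Matrix (Fin m) (Fin m) ℂ) ⊗ₖ C))
      = NormedSpace.exp
          (tr1 (B ⊗ₖ (1 : Matrix (Fin n) (Fin n) ℂ) + (1 : Matrix (Fin m) (Fin m) ℂ) ⊗ₖ C)) ↔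
      hpow (NormedSpace.exp C) m = (NormedSpace.exp C) ^ m := by
  rw [exp_kroneckerSum, det1_kronecker, det_exp, tr1_add, tr1_kronecker, tr1_kronecker,
    trace_one, Fintype.card_fin, exp_smul_one_add_natCast_smul]
  exact (smul_right_injective _ (Complex.exp_ne_zero _)).eq_iff

/-- For the Kronecker sum `A = B ⊗ Iₙ + Iₘ ⊗ C`, `det₁(exp A) = exp(tr₁ A)`
iff the `m`-th Hadamard and matrix powers of `exp C` coincide. -/
theorem det1_exp_kroneckerSum_iff {m n : ℕ} (hm : 0 < m) (hn : 0 < n)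
    (B : Matrix (Fin m) (Fin m) ℂ) (C : Matrix (Fin n) (Fin n) ℂ) :
    det1 (NormedSpace.exp
        (B ⊗ₖ (1 : Matrix (Fin n) (Fin n) ℂ) + (1 : Matrix (Fin m) (Fin m) ℂ) ⊗ₖ C))
      = NormedSpace.exp
          (tr1 (B ⊗ₖ (1 : Matrix (Fin n) (Fin n) ℂ) + (1 : Matrix (Fin m) (Fin m) ℂ) ⊗ₖ C)) ↔
      hpow (NormedSpace.exp C) m = (NormedSpace.exp C) ^ m :=
  det1_exp_kroneckerSum_iff_general B C
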